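/- arXiv:2106.09580 — 9 statements merged into one kernel-verified Lean document; each statement's English description precedes it below -/
import Mathlib

section
/- For any nonempty coalition C of players, the weighted cost of C equals costw(C) = μ_e + σ²·T_C − σ²·(Σ_{i∈C} n_i²)/T_C. -/
open Finset

variable {ι : Type*}

/-- The expected error of player `j` in coalition `C`. -/
noncomputable def err [DecidableEq ι] (μ σ2 : ℝ) (n : ι → ℕ) (C : Finset ι) (j : ι) : ℝ :=
  μ / (∑ i ∈ C, (n i : ℝ)) +
    σ2 * ((∑ i ∈ C.erase j, (n i : ℝ) ^ 2) + (∑ i ∈ C.erase j, (n i : ℝ)) ^ 2) /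
      (∑ i ∈ C, (n i : ℝ)) ^ 2

/-- The weighted cost of a coalition `C`. -/
noncomputable def costw [DecidableEq ι] (μ σ2 : ℝ) (n : ι → ℕ) (C : Finset ι) : ℝ :=
  ∑ j ∈ C, (n j : ℝ) * err μ σ2 n C j

/-!
With `T = Σ nᵢ` and `S = Σ nᵢ²`, the numerator of the variance term of player `j` is
`(S - nⱼ²) + (T - nⱼ)² = S + T² - 2 T nⱼ`, so weighting by `nⱼ` and summing gives
`T (S + T²) - 2 T S = T³ - T S`. Dividing by `T²` yields `σ² (T - S / T)`, while the
bias terms `nⱼ μ / T` sum to `μ`.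
-/

theorem Finset.sum_mul_sum_erase_sq_add_sq_sum_erase [DecidableEq ι] (w : ι → ℝ)
    (C : Finset ι) :
    ∑ j ∈ C, w j * ((∑ i ∈ C.erase j, w i ^ 2) + (∑ i ∈ C.erase j, w i) ^ 2) =
      (∑ i ∈ C, w i) ^ 3 - (∑ i ∈ C, w i) * ∑ i ∈ C, w i ^ 2 := by
  set T := ∑ i ∈ C, w i
  set S := ∑ i ∈ C, w i ^ 2
  calc ∑ j ∈ C, w j * ((∑ i ∈ C.erase j, w i ^ 2) + (∑ i ∈ C.erase j, w i) ^ 2)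
      = ∑ j ∈ C, ((S + T ^ 2) * w j - 2 * T * w j ^ 2) := by
        refine sum_congr rfl fun j hj => ?_
        rw [sum_erase_eq_sub hj, sum_erase_eq_sub hj]
        ring
    _ = T ^ 3 - T * S := by
        rw [sum_sub_distrib, ← mul_sum, ← mul_sum]
        ring

theorem costw_eq_sum_div [DecidableEq ι] (μ σ2 : ℝ) (n : ι → ℕ) (C : Finset ι) :
    costw μ σ2 n C =
      μ / (∑ i ∈ C, (n i : ℝ)) * (∑ i ∈ C, (n i : ℝ)) +
        σ2 * ((∑ i ∈ C, (n i : ℝ)) ^ 3 - (∑ i ∈ C, (n i : ℝ)) * ∑ i ∈ C, (n i : ℝ) ^ 2) /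
          (∑ i ∈ C, (n i : ℝ)) ^ 2 := by
  rw [← sum_mul_sum_erase_sq_add_sq_sum_erase, mul_sum, mul_sum, sum_div,
    ← sum_add_distrib]
  refine sum_congr rfl fun j _ => ?_
  rw [err]
  ring

theorem costw_eq_general [DecidableEq ι] (μ σ2 : ℝ) (n : ι → ℕ)
    (hn : ∀ i, 0 < n i)
    (C : Finset ι) (hC : C.Nonempty) :
    costw μ σ2 n C =
      μ + σ2 * (∑ i ∈ C, (n i : ℝ)) -
        σ2 * (∑ i ∈ C, (n i : ℝ) ^ 2) / (∑ i ∈ C, (n i : ℝ)) := by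
  have hT : (∑ i ∈ C, (n i : ℝ)) ≠ 0 :=
    (sum_pos (fun i _ => Nat.cast_pos.mpr (hn i)) hC).ne'
  rw [costw_eq_sum_div]
  field_simp
  ring

/-- For any nonempty coalition `C`, the weighted cost of `C` equals
`μ_e + σ² · T_C − σ² · (Σ_{i∈C} n_i²) / T_C`. -/
theorem costw_eq [DecidableEq ι] (μ σ2 : ℝ) (n : ι → ℕ)
    (hμ : 0 < μ) (hσ : 0 < σ2) (hn : ∀ i, 0 < n i)
    (C : Finset ι) (hC : C.Nonempty) :
    costw μ σ2 n C =
      μ + σ2 * (∑ i ∈ C, (n i : ℝ)) -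
        σ2 * (∑ i ∈ C, (n i : ℝ) ^ 2) / (∑ i ∈ C, (n i : ℝ)) :=
  costw_eq_general μ σ2 n hn C hC
end

section
/- For every real ρ > 1 there exists a setting (a number of players k, positive integer sample counts n_1,…,n_k, and parameters μ_e > 0, σ² > 0) and a partition Π of the players such that costw(Π_alone) > ρ·costw(Π), where Π_alone is the partition into singletons (local learning); hence local learning can have cost more than ρ times the optimal (minimum) cost. -/
open Finset

variable {ι : Type*}

/-- The total cost of a partition of the players into coalitions. -/
noncomputable def costP [DecidableEq ι] [Fintype ι] (μ σ2 : ℝ) (n : ι → ℕ)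
    (P : Finpartition (Finset.univ : Finset ι)) : ℝ :=
  ∑ C ∈ P.parts, costw μ σ2 n C

/-!
With `k` players holding one sample each, `μ_e = 1` and `σ² = 1/(k-1)`, local learning costs `k`,
while the grand coalition costs `μ_e + σ²(k-1) = 2`; it remains to take `k > 2ρ`.
-/

variable [DecidableEq ι]

theorem costw_singleton (μ σ2 : ℝ) (n : ι → ℕ) (i : ι) (hi : n i ≠ 0) :
    costw μ σ2 n {i} = μ := by
  have hi' : (n i : ℝ) ≠ 0 := by exact_mod_cast hi
  simp only [costw, err, sum_singleton, erase_singleton, sum_empty, ne_eq, OfNat.ofNat_ne_zero,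
    not_false_eq_true, zero_pow, add_zero, mul_zero, zero_div]
  field_simp

theorem err_of_const (μ σ2 : ℝ) {m : ℕ} (hm : m ≠ 0) {C : Finset ι} {j : ι} (hj : j ∈ C) :
    err μ σ2 (fun _ => m) C j = μ / (#C * m) + σ2 * (#C - 1) / #C := by
  have hm' : (m : ℝ) ≠ 0 := by exact_mod_cast hm
  have hC : (#C : ℝ) ≠ 0 := by exact_mod_cast (card_pos.mpr ⟨j, hj⟩).ne'
  have herase : (#(C.erase j) : ℝ) = #C - 1 := by
    rw [card_erase_of_mem hj, Nat.cast_pred (card_pos.mpr ⟨j, hj⟩)]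
  simp only [err, sum_const, nsmul_eq_mul, herase]
  field_simp
  ring

theorem costw_of_const (μ σ2 : ℝ) {m : ℕ} (hm : m ≠ 0) {C : Finset ι} (hC : C.Nonempty) :
    costw μ σ2 (fun _ => m) C = μ + σ2 * m * (#C - 1) := by
  have hm' : (m : ℝ) ≠ 0 := by exact_mod_cast hm
  have hC' : (#C : ℝ) ≠ 0 := by exact_mod_cast hC.card_pos.ne'
  rw [costw, sum_congr rfl fun j hj => by rw [err_of_const μ σ2 hm hj], sum_const, nsmul_eq_mul]
  field_simp

theorem costP_indiscrete [Fintype ι] (μ σ2 : ℝ) (n : ι → ℕ) (h : (univ : Finset ι) ≠ ⊥) :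
    costP μ σ2 n (Finpartition.indiscrete h) = costw μ σ2 n univ := by
  simp [costP]

/-- For every `ρ > 1` there is a setting (number of players, positive sample counts,
parameters `μ_e > 0`, `σ² > 0`) and a partition `P` whose cost is beaten by a factor
more than `ρ` by local learning: the partition into singletons costs more than
`ρ` times the cost of `P`.  Hence local learning can be more than `ρ` times optimal. -/
theorem local_learning_arbitrarily_bad (ρ : ℝ) (hρ : 1 < ρ) :
    ∃ (k : ℕ) (n : Fin k → ℕ) (μ σ2 : ℝ),
      (∀ i, 0 < n i) ∧ 0 < μ ∧ 0 < σ2 ∧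
      ∃ P : Finpartition (Finset.univ : Finset (Fin k)),
        (∑ i : Fin k, costw μ σ2 n {i}) > ρ * costP μ σ2 n P := by
  obtain ⟨k, hk⟩ := exists_nat_gt (2 * ρ)
  have hk1 : (1 : ℝ) < k := by linarith
  have huniv : (univ : Finset (Fin k)).Nonempty :=
    univ_nonempty_iff.mpr ⟨⟨0, by exact_mod_cast zero_lt_one.trans hk1⟩⟩
  refine ⟨k, fun _ => 1, 1, 1 / (k - 1), fun _ => one_pos, one_pos,
    by simpa using hk1, Finpartition.indiscrete huniv.ne_empty, ?_⟩
  have hlocal : ∑ i : Fin k, costw 1 (1 / (k - 1)) (fun _ => 1) {i} = k := by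
    simp [costw_singleton]
  have hgrand :
      costP 1 (1 / (k - 1)) (fun _ => 1) (Finpartition.indiscrete huniv.ne_empty) = 2 := by
    rw [costP_indiscrete, costw_of_const _ _ one_ne_zero huniv, card_univ, Fintype.card_fin]
    field_simp [(sub_pos.mpr hk1).ne']
    norm_num
  rw [hlocal, hgrand]
  linarith
end

section
/- (Monotonicity of joining.) Let Q be a nonempty coalition and let j, k be players not in Q. If n_k ≥ n_j and err_j(Q ∪ {j}) ≥ err_j({j}), then err_k(Q ∪ {k}) ≥ err_k({k}). Conversely, if n_k ≤ n_j and err_j(Q ∪ {j}) ≤ err_j({j}), then err_k(Q ∪ {k}) ≤ err_k({k}). -/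
open Finset

variable {ι : Type*}

/-!
Write `S` for the total size of `Q` and `n = n_m` for the size of the joining player `m`.
Putting `err_m(Q ∪ {m}) - μ/n` over the common denominator `(S + n)²` leaves the numerator
`T - μ S² / n`, where the threshold `T = σ²(Σ_Q n_i² + S²) - μ S` depends only on `Q`.
So `m` prefers to stay alone exactly when `μ S² / n ≤ T`, and `μ S² / n` decreases in `n`:
larger players are less eager to join.
-/

noncomputable def joinThreshold (μ σ2 : ℝ) (n : ι → ℕ) (Q : Finset ι) : ℝ :=
  σ2 * (∑ i ∈ Q, (n i : ℝ) ^ 2 + (∑ i ∈ Q, (n i : ℝ)) ^ 2) - μ * ∑ i ∈ Q, (n i : ℝ)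

theorem sum_cast_add_cast_pos (n : ι → ℕ) {Q : Finset ι} {m : ι} (hnm : 0 < n m) :
    (0 : ℝ) < ∑ i ∈ Q, (n i : ℝ) + n m :=
  add_pos_of_nonneg_of_pos (sum_nonneg fun i _ => Nat.cast_nonneg (n i)) (Nat.cast_pos.mpr hnm)

section

variable [DecidableEq ι] (μ σ2 : ℝ) (n : ι → ℕ) {Q : Finset ι} {m : ι}

theorem err_singleton_self : err μ σ2 n {m} m = μ / n m := by
  simp [err]

theorem err_insert_sub_err_singleton (hm : m ∉ Q) (hnm : 0 < n m) :
    err μ σ2 n (insert m Q) m - err μ σ2 n {m} m =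
      (joinThreshold μ σ2 n Q - μ * (∑ i ∈ Q, (n i : ℝ)) ^ 2 / n m) /
        (∑ i ∈ Q, (n i : ℝ) + n m) ^ 2 := by
  have hx : (0 : ℝ) < n m := Nat.cast_pos.mpr hnm
  have hSx := sum_cast_add_cast_pos n (Q := Q) hnm
  rw [err_singleton_self, err, sum_insert hm, erase_insert hm, joinThreshold]
  field_simp
  ring

theorem err_singleton_le_err_insert_iff (hm : m ∉ Q) (hnm : 0 < n m) :
    err μ σ2 n {m} m ≤ err μ σ2 n (insert m Q) m ↔
      μ * (∑ i ∈ Q, (n i : ℝ)) ^ 2 / n m ≤ joinThreshold μ σ2 n Q := by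
  have hden := pow_pos (sum_cast_add_cast_pos n (Q := Q) hnm) 2
  rw [← sub_nonneg, err_insert_sub_err_singleton μ σ2 n hm hnm, le_div_iff₀ hden, zero_mul,
    sub_nonneg]

theorem err_insert_le_err_singleton_iff (hm : m ∉ Q) (hnm : 0 < n m) :
    err μ σ2 n (insert m Q) m ≤ err μ σ2 n {m} m ↔
      joinThreshold μ σ2 n Q ≤ μ * (∑ i ∈ Q, (n i : ℝ)) ^ 2 / n m := by
  have hden := pow_pos (sum_cast_add_cast_pos n (Q := Q) hnm) 2
  rw [← sub_nonpos, err_insert_sub_err_singleton μ σ2 n hm hnm, div_le_iff₀ hden, zero_mul,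
    sub_nonpos]

end

theorem monotonicity_of_joining_general [DecidableEq ι] (μ σ2 : ℝ) (n : ι → ℕ)
    (hμ : 0 < μ) (hn : ∀ i, 0 < n i)
    (Q : Finset ι) (j k : ι) (hj : j ∉ Q) (hk : k ∉ Q) :
    (n j ≤ n k →
      err μ σ2 n (insert j Q) j ≥ err μ σ2 n {j} j →
      err μ σ2 n (insert k Q) k ≥ err μ σ2 n {k} k) ∧
    (n k ≤ n j →
      err μ σ2 n (insert j Q) j ≤ err μ σ2 n {j} j →
      err μ σ2 n (insert k Q) k ≤ err μ σ2 n {k} k) := by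
  have hstay_antitone : ∀ {a b : ι}, n a ≤ n b →
      μ * (∑ i ∈ Q, (n i : ℝ)) ^ 2 / n b ≤ μ * (∑ i ∈ Q, (n i : ℝ)) ^ 2 / n a :=
    fun {a _} hab => div_le_div_of_nonneg_left (by positivity)
      (Nat.cast_pos.mpr (hn a)) (Nat.cast_le.mpr hab)
  constructor
  · intro hjk hstay
    rw [ge_iff_le, err_singleton_le_err_insert_iff μ σ2 n hk (hn k)]
    rw [ge_iff_le, err_singleton_le_err_insert_iff μ σ2 n hj (hn j)] at hstay
    exact (hstay_antitone hjk).trans hstay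
  · intro hkj hjoin
    rw [err_insert_le_err_singleton_iff μ σ2 n hk (hn k)]
    rw [err_insert_le_err_singleton_iff μ σ2 n hj (hn j)] at hjoin
    exact hjoin.trans (hstay_antitone hkj)

/-- (Monotonicity of joining.)  Let `Q` be a nonempty coalition and `j, k ∉ Q`.
If `n_k ≥ n_j` and player `j` prefers local learning to joining `Q`, then so does `k`.
Conversely, if `n_k ≤ n_j` and player `j` wishes to join `Q`, then so does `k`. -/
theorem monotonicity_of_joining [DecidableEq ι] (μ σ2 : ℝ) (n : ι → ℕ)
    (hμ : 0 < μ) (hσ : 0 < σ2) (hn : ∀ i, 0 < n i)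
    (Q : Finset ι) (hQ : Q.Nonempty) (j k : ι) (hj : j ∉ Q) (hk : k ∉ Q) :
    (n j ≤ n k →
      err μ σ2 n (insert j Q) j ≥ err μ σ2 n {j} j →
      err μ σ2 n (insert k Q) k ≥ err μ σ2 n {k} k) ∧
    (n k ≤ n j →
      err μ σ2 n (insert j Q) j ≤ err μ σ2 n {j} j →
      err μ σ2 n (insert k Q) k ≤ err μ σ2 n {k} k) :=
  monotonicity_of_joining_general μ σ2 n hμ hn Q j k hj hk
end

section
/- (Monotonicity of leaving.) Let Q be a coalition and let j, k ∈ Q. If n_k ≥ n_j and err_j(Q) ≥ err_j({j}) (player j wishes to leave Q for local learning), then err_k(Q) ≥ err_k({k}). Conversely, if n_k ≤ n_j and err_j(Q) ≤ err_j({j}) (player j does not wish to leave), then err_k(Q) ≤ err_k({k}). -/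
/-!
Write `N = ∑ n_i` and `S = ∑ n_i²` over `Q`. Player `l` with `x = n_l` samples wishes to leave
exactly when `f(x) = x (μN + σ²(S − x² + (N − x)²)) − μN² ≥ 0`, a concave quadratic in `x`.
For `x = n_j ≤ y = n_k` one has `f(y) − f(x) = (y − x) E` with `E = μN + σ²(S + N² − 2N(x + y))`,
and `f(y) = (N − y)(−E) + σ²N((S − x² − y²) + (N − x − y)²)`. So either `E ≥ 0` and `f` does not
decrease from `x` to `y`, or `E < 0` and `f(y) > 0`; both directions of the theorem follow.
-/

open Finset

variable {ι : Type*}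

noncomputable def leavingIncentive (μ σ2 N S x : ℝ) : ℝ :=
  x * (μ * N + σ2 * (S - x ^ 2 + (N - x) ^ 2)) - μ * N ^ 2

theorem leavingIncentive_le_or_pos {μ σ2 N S x y : ℝ} (hσ : 0 ≤ σ2) (hx : 0 < x) (hxy : x ≤ y)
    (hN : x + y ≤ N) (hS : x ^ 2 + y ^ 2 ≤ S) :
    leavingIncentive μ σ2 N S x ≤ leavingIncentive μ σ2 N S y ∨
      0 < leavingIncentive μ σ2 N S y := by
  set E := μ * N + σ2 * (S + N ^ 2 - 2 * N * (x + y))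
  have hdiff : leavingIncentive μ σ2 N S y - leavingIncentive μ σ2 N S x = (y - x) * E := by
    simp only [leavingIncentive, E]; ring
  have hsplit : leavingIncentive μ σ2 N S y =
      (N - y) * -E + σ2 * N * ((S - x ^ 2 - y ^ 2) + (N - x - y) ^ 2) := by
    simp only [leavingIncentive, E]; ring
  rcases le_or_gt 0 E with hE | hE
  · left
    linarith [mul_nonneg (sub_nonneg.2 hxy) hE]
  · right
    rw [hsplit]
    have hfirst : 0 < (N - y) * -E := mul_pos (by linarith) (by linarith)
    have hsecond : 0 ≤ σ2 * N * ((S - x ^ 2 - y ^ 2) + (N - x - y) ^ 2) :=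
      mul_nonneg (mul_nonneg hσ (by linarith)) (add_nonneg (by linarith) (sq_nonneg _))
    linarith

section Coalition

variable (μ σ2 : ℝ) (n : ι → ℕ) {C : Finset ι}

theorem cast_mul_sum_sq_pos {l : ι} (hl : l ∈ C) (hpos : 0 < n l) :
    (0 : ℝ) < n l * (∑ i ∈ C, (n i : ℝ)) ^ 2 := by
  have hl' : (0 : ℝ) < n l := Nat.cast_pos.2 hpos
  exact mul_pos hl' (pow_pos (sum_pos' (fun i _ => Nat.cast_nonneg (n i)) ⟨l, hl, hl'⟩) 2)

theorem leavingIncentive_le_or_pos_of_mem {j k : ι} (hj : j ∈ C) (hk : k ∈ C) (hjk : j ≠ k)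
    (hσ : 0 ≤ σ2) (hpos : 0 < n j) (hle : n j ≤ n k) :
    leavingIncentive μ σ2 (∑ i ∈ C, (n i : ℝ)) (∑ i ∈ C, (n i : ℝ) ^ 2) (n j) ≤
        leavingIncentive μ σ2 (∑ i ∈ C, (n i : ℝ)) (∑ i ∈ C, (n i : ℝ) ^ 2) (n k) ∨
      0 < leavingIncentive μ σ2 (∑ i ∈ C, (n i : ℝ)) (∑ i ∈ C, (n i : ℝ) ^ 2) (n k) :=
  leavingIncentive_le_or_pos hσ (Nat.cast_pos.2 hpos) (Nat.cast_le.2 hle)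
    (add_le_sum (fun i _ => Nat.cast_nonneg (n i)) hj hk hjk)
    (add_le_sum (fun i _ => sq_nonneg (n i : ℝ)) hj hk hjk)

variable [DecidableEq ι]

theorem err_sub_err_singleton {l : ι} (hl : l ∈ C) (hpos : 0 < n l) :
    err μ σ2 n C l - err μ σ2 n {l} l =
      leavingIncentive μ σ2 (∑ i ∈ C, (n i : ℝ)) (∑ i ∈ C, (n i : ℝ) ^ 2) (n l) /
        (n l * (∑ i ∈ C, (n i : ℝ)) ^ 2) := by
  have hd := cast_mul_sum_sq_pos n hl hpos
  have hl' : (n l : ℝ) ≠ 0 := by positivity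
  have hN : ∑ i ∈ C, (n i : ℝ) ≠ 0 := fun h => by simp [h] at hd
  simp only [err, leavingIncentive, sum_singleton, erase_singleton, sum_empty,
    sum_erase_eq_sub hl]
  field_simp
  ring

theorem err_singleton_le_err_iff {l : ι} (hl : l ∈ C) (hpos : 0 < n l) :
    err μ σ2 n {l} l ≤ err μ σ2 n C l ↔
      0 ≤ leavingIncentive μ σ2 (∑ i ∈ C, (n i : ℝ)) (∑ i ∈ C, (n i : ℝ) ^ 2) (n l) := by
  rw [← sub_nonneg, err_sub_err_singleton μ σ2 n hl hpos,
    le_div_iff₀ (cast_mul_sum_sq_pos n hl hpos), zero_mul]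

theorem err_le_err_singleton_iff {l : ι} (hl : l ∈ C) (hpos : 0 < n l) :
    err μ σ2 n C l ≤ err μ σ2 n {l} l ↔
      leavingIncentive μ σ2 (∑ i ∈ C, (n i : ℝ)) (∑ i ∈ C, (n i : ℝ) ^ 2) (n l) ≤ 0 := by
  rw [← sub_nonpos, err_sub_err_singleton μ σ2 n hl hpos,
    div_le_iff₀ (cast_mul_sum_sq_pos n hl hpos), zero_mul]

end Coalition

theorem monotonicity_of_leaving_general [DecidableEq ι] (μ σ2 : ℝ) (n : ι → ℕ)
    (hσ : 0 < σ2) (hn : ∀ i, 0 < n i)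
    (Q : Finset ι) (j k : ι) (hj : j ∈ Q) (hk : k ∈ Q) :
    (n j ≤ n k →
      err μ σ2 n Q j ≥ err μ σ2 n {j} j →
      err μ σ2 n Q k ≥ err μ σ2 n {k} k) ∧
    (n k ≤ n j →
      err μ σ2 n Q j ≤ err μ σ2 n {j} j →
      err μ σ2 n Q k ≤ err μ σ2 n {k} k) := by
  rcases eq_or_ne j k with rfl | hjk
  · exact ⟨fun _ h => h, fun _ h => h⟩
  refine ⟨fun hle hleave => ?_, fun hle hstay => ?_⟩
  · rw [ge_iff_le, err_singleton_le_err_iff μ σ2 n hj (hn j)] at hleave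
    rw [ge_iff_le, err_singleton_le_err_iff μ σ2 n hk (hn k)]
    rcases leavingIncentive_le_or_pos_of_mem μ σ2 n hj hk hjk hσ.le (hn j) hle with h | h
    · exact hleave.trans h
    · exact h.le
  · rw [err_le_err_singleton_iff μ σ2 n hj (hn j)] at hstay
    rw [err_le_err_singleton_iff μ σ2 n hk (hn k)]
    rcases leavingIncentive_le_or_pos_of_mem μ σ2 n hk hj hjk.symm hσ.le (hn k) hle with h | h
    · exact h.trans hstay
    · exact absurd hstay h.not_ge

/-- (Monotonicity of leaving.)  Let `Q` be a coalition and `j, k ∈ Q`.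
If `n_k ≥ n_j` and player `j` wishes to leave `Q` for local learning, then so does `k`.
Conversely, if `n_k ≤ n_j` and player `j` does not wish to leave, then neither does `k`. -/
theorem monotonicity_of_leaving [DecidableEq ι] (μ σ2 : ℝ) (n : ι → ℕ)
    (hμ : 0 < μ) (hσ : 0 < σ2) (hn : ∀ i, 0 < n i)
    (Q : Finset ι) (j k : ι) (hj : j ∈ Q) (hk : k ∈ Q) :
    (n j ≤ n k →
      err μ σ2 n Q j ≥ err μ σ2 n {j} j →
      err μ σ2 n Q k ≥ err μ σ2 n {k} k) ∧
    (n k ≤ n j →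
      err μ σ2 n Q j ≤ err μ σ2 n {j} j →
      err μ σ2 n Q k ≤ err μ σ2 n {k} k) :=
  monotonicity_of_leaving_general μ σ2 n hσ hn Q j k hj hk
end

section
/- If every player i satisfies n_i ≥ μ_e/σ², then any individually stable partition Π is optimal: costw(Π) ≤ costw(Π') for every partition Π' of the players. The same holds for any core stable partition. -/
/-!
When every player has `n_i ≥ μ_e/σ²`, joining a coalition never beats learning alone:
`err_j(C) ≥ μ_e/n_j`, i.e. each player contributes at least `μ_e` to the weighted cost of any
partition. Either kind of stability forbids a player from preferring to be alone, so in a stable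
partition each player contributes at most `μ_e`; hence its cost is the minimum `μ_e · |players|`.
-/

open Finset

variable {ι : Type*}

/-- A partition is individually stable if no player prefers local learning to its own
coalition, and no player can move to another coalition of the partition in a way that
strictly decreases its own error while not increasing the error of any member of the
receiving coalition. -/
def IndividuallyStable [DecidableEq ι] [Fintype ι] (μ σ2 : ℝ) (n : ι → ℕ)
    (P : Finpartition (Finset.univ : Finset ι)) : Prop :=
  ∀ i : ι, ∀ Ci ∈ P.parts, i ∈ Ci →
    (¬ err μ σ2 n {i} i < err μ σ2 n Ci i) ∧
    ∀ C ∈ P.parts, C ≠ Ci →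
      ¬ (err μ σ2 n (insert i C) i < err μ σ2 n Ci i ∧
         ∀ j ∈ C, err μ σ2 n (insert i C) j ≤ err μ σ2 n C j)

/-- A partition is core stable if no nonempty coalition of players can deviate so that
every one of its members strictly decreases its error. -/
def CoreStable [DecidableEq ι] [Fintype ι] (μ σ2 : ℝ) (n : ι → ℕ)
    (P : Finpartition (Finset.univ : Finset ι)) : Prop :=
  ¬ ∃ S : Finset ι, S.Nonempty ∧
      ∀ i ∈ S, ∀ Ci ∈ P.parts, i ∈ Ci → err μ σ2 n S i < err μ σ2 n Ci i

section Coalition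

variable [DecidableEq ι]

lemma err_singleton (μ σ2 : ℝ) (n : ι → ℕ) (j : ι) : err μ σ2 n {j} j = μ / n j := by
  simp [err]

lemma err_singleton_le_err {μ σ2 : ℝ} {n : ι → ℕ} {C : Finset ι} {j : ι}
    (hlarge : ∀ i ∈ C, μ ≤ σ2 * n i) (hnj : 0 < n j) (hj : j ∈ C) :
    err μ σ2 n {j} j ≤ err μ σ2 n C j := by
  set m : ℝ := ∑ i ∈ C.erase j, (n i : ℝ)
  set S2 : ℝ := ∑ i ∈ C.erase j, (n i : ℝ) ^ 2
  have hnj : (0 : ℝ) < n j := by exact_mod_cast hnj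
  have hm : 0 ≤ m := sum_nonneg fun i _ => by positivity
  have hsum : ∑ i ∈ C, (n i : ℝ) = n j + m := (add_sum_erase C _ hj).symm
  -- each other member `i` contributes `μ n_i ≤ σ² n_i²`
  have hS2 : μ * m ≤ σ2 * S2 := by
    rw [mul_sum, mul_sum]
    refine sum_le_sum fun i hi => ?_
    nlinarith [hlarge i (mem_of_mem_erase hi), (n i).cast_nonneg (α := ℝ)]
  rw [err_singleton, err, hsum, div_add_div _ _ (by positivity) (by positivity),
    div_le_div_iff₀ hnj (by positivity)]
  -- cleared of denominators, the goal is `μ m (n_j + m) ≤ σ² n_j (S2 + m²)`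
  nlinarith [mul_le_mul_of_nonneg_right hS2 hnj.le,
    mul_le_mul_of_nonneg_right (hlarge j hj) (mul_nonneg hm hm), mul_pos hnj hnj]

section Partition

variable [Fintype ι]

def IndividuallyRational (μ σ2 : ℝ) (n : ι → ℕ) (P : Finpartition (univ : Finset ι)) : Prop :=
  ∀ j, err μ σ2 n (P.part j) j ≤ err μ σ2 n {j} j

lemma costP_eq_sum_err_part (μ σ2 : ℝ) (n : ι → ℕ) (P : Finpartition (univ : Finset ι)) :
    costP μ σ2 n P = ∑ j, n j * err μ σ2 n (P.part j) j := by
  have hparts : ∀ C ∈ P.parts,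
      costw μ σ2 n C = ∑ j ∈ id C, n j * err μ σ2 n (P.part j) j := fun C hC =>
    sum_congr rfl fun j hj => by rw [P.part_eq_of_mem hC hj]
  rw [costP, sum_congr rfl hparts, ← sum_biUnion P.supIndep.pairwiseDisjoint]
  exact sum_congr P.biUnion_parts fun _ _ => rfl

lemma sum_err_singleton_le_costP {μ σ2 : ℝ} {n : ι → ℕ} (hlarge : ∀ i, μ ≤ σ2 * n i)
    (hn : ∀ i, 0 < n i) (P : Finpartition (univ : Finset ι)) :
    ∑ j, n j * err μ σ2 n {j} j ≤ costP μ σ2 n P := by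
  rw [costP_eq_sum_err_part]
  exact sum_le_sum fun j _ => mul_le_mul_of_nonneg_left
    (err_singleton_le_err (fun i _ => hlarge i) (hn j) (P.mem_part (mem_univ j))) (by positivity)

lemma IndividuallyRational.costP_le {μ σ2 : ℝ} {n : ι → ℕ} {P : Finpartition (univ : Finset ι)}
    (hP : IndividuallyRational μ σ2 n P) (hlarge : ∀ i, μ ≤ σ2 * n i) (hn : ∀ i, 0 < n i)
    (P' : Finpartition (univ : Finset ι)) : costP μ σ2 n P ≤ costP μ σ2 n P' :=
  calc costP μ σ2 n P ≤ ∑ j, n j * err μ σ2 n {j} j := by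
        rw [costP_eq_sum_err_part]
        exact sum_le_sum fun j _ => mul_le_mul_of_nonneg_left (hP j) (by positivity)
    _ ≤ costP μ σ2 n P' := sum_err_singleton_le_costP hlarge hn P'

lemma IndividuallyStable.individuallyRational {μ σ2 : ℝ} {n : ι → ℕ}
    {P : Finpartition (univ : Finset ι)} (hP : IndividuallyStable μ σ2 n P) :
    IndividuallyRational μ σ2 n P := fun j =>
  not_lt.mp (hP j _ (P.part_mem.2 (mem_univ j)) (P.mem_part (mem_univ j))).1

lemma CoreStable.individuallyRational {μ σ2 : ℝ} {n : ι → ℕ}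
    {P : Finpartition (univ : Finset ι)} (hP : CoreStable μ σ2 n P) :
    IndividuallyRational μ σ2 n P := fun j => by
  by_contra! hlt
  refine hP ⟨{j}, singleton_nonempty j, fun i hi Ci hCi hiCi => ?_⟩
  rw [mem_singleton] at hi
  subst hi
  rwa [← P.part_eq_of_mem hCi hiCi]

end Partition

end Coalition

theorem stable_implies_optimal_large_players_general [DecidableEq ι] [Fintype ι]
    (μ σ2 : ℝ) (n : ι → ℕ) (hσ : 0 < σ2) (hn : ∀ i, 0 < n i)
    (hbig : ∀ i, μ / σ2 ≤ (n i : ℝ))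
    (P : Finpartition (Finset.univ : Finset ι)) :
    (IndividuallyStable μ σ2 n P →
      ∀ P' : Finpartition (Finset.univ : Finset ι), costP μ σ2 n P ≤ costP μ σ2 n P') ∧
    (CoreStable μ σ2 n P →
      ∀ P' : Finpartition (Finset.univ : Finset ι), costP μ σ2 n P ≤ costP μ σ2 n P') := by
  have hlarge : ∀ i, μ ≤ σ2 * n i := fun i => by
    simpa only [div_le_iff₀ hσ, mul_comm] using hbig i
  exact ⟨fun hP => hP.individuallyRational.costP_le hlarge hn,
    fun hP => hP.individuallyRational.costP_le hlarge hn⟩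

/-- If every player `i` satisfies `n_i ≥ μ_e/σ²`, then any individually stable
partition is optimal, and likewise any core stable partition is optimal. -/
theorem stable_implies_optimal_large_players [DecidableEq ι] [Fintype ι]
    (μ σ2 : ℝ) (n : ι → ℕ) (hμ : 0 < μ) (hσ : 0 < σ2) (hn : ∀ i, 0 < n i)
    (hbig : ∀ i, μ / σ2 ≤ (n i : ℝ))
    (P : Finpartition (Finset.univ : Finset ι)) :
    (IndividuallyStable μ σ2 n P →
      ∀ P' : Finpartition (Finset.univ : Finset ι), costP μ σ2 n P ≤ costP μ σ2 n P') ∧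
    (CoreStable μ σ2 n P →
      ∀ P' : Finpartition (Finset.univ : Finset ι), costP μ σ2 n P ≤ costP μ σ2 n P') :=
  stable_implies_optimal_large_players_general μ σ2 n hσ hn hbig P
end

section
/- (Lower bound on achievable error.) Assume μ_e ≥ σ². Let j be a player and C any (possibly empty) coalition of players not containing j. If n_j ≥ (μ_e + σ²)/(2σ²), then err_j(C ∪ {j}) ≥ (1/2)·μ_e/n_j; otherwise err_j(C ∪ {j}) ≥ σ². -/
open Finset

variable {ι : Type*}

/-! Write `m = n_j`, `s = ∑_{i ∈ C} n_i` and `Q = ∑_{i ∈ C} n_i²`, so that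
`err_j(C ∪ {j}) = μ/(m + s) + σ²(Q + s²)/(m + s)²`. Clearing the denominator, the first bound
amounts to `μ m² + (2σ²m - μ) s² + 2σ²m Q ≥ 0`, where every term is nonnegative once
`μ ≤ 2σ²m`. The second amounts to `(μ - σ²m) m + (μ - 2σ²m) s + σ² Q ≥ 0`, which follows from
`μ ≥ σ²(2m - 1)`, `m ≥ 1` and `Q ≥ s`, the last because the `n_i` are natural numbers. -/

theorem err_insert_self [DecidableEq ι] (μ σ2 : ℝ) (n : ι → ℕ) {j : ι} {C : Finset ι}
    (hj : j ∉ C) :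
    err μ σ2 n (insert j C) j =
      μ / (n j + ∑ i ∈ C, (n i : ℝ)) +
        σ2 * ((∑ i ∈ C, (n i : ℝ) ^ 2) + (∑ i ∈ C, (n i : ℝ)) ^ 2) /
          (n j + ∑ i ∈ C, (n i : ℝ)) ^ 2 := by
  rw [err, erase_insert hj, sum_insert hj]

theorem sum_natCast_le_sum_natCast_sq (n : ι → ℕ) (C : Finset ι) :
    ∑ i ∈ C, (n i : ℝ) ≤ ∑ i ∈ C, (n i : ℝ) ^ 2 :=
  sum_le_sum fun i _ => by exact_mod_cast Nat.le_self_pow two_ne_zero (n i)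

section ErrorBounds

variable {μ σ2 m s Q : ℝ}

theorem half_div_le_div_add_div_sq (hm : 0 < m) (hs : 0 ≤ s) (hQ : 0 ≤ Q) (hμ : 0 ≤ μ)
    (hσ : 0 ≤ σ2) (h : μ ≤ 2 * σ2 * m) :
    1 / 2 * (μ / m) ≤ μ / (m + s) + σ2 * (Q + s ^ 2) / (m + s) ^ 2 := by
  have hms : 0 < m + s := by linarith
  have hnum : 0 ≤ μ * m ^ 2 + (2 * σ2 * m - μ) * s ^ 2 + 2 * σ2 * m * Q := by
    have := sub_nonneg.2 h
    positivity
  have hdiff : μ / (m + s) + σ2 * (Q + s ^ 2) / (m + s) ^ 2 - 1 / 2 * (μ / m) =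
      (μ * m ^ 2 + (2 * σ2 * m - μ) * s ^ 2 + 2 * σ2 * m * Q) / (2 * m * (m + s) ^ 2) := by
    field_simp
    ring
  rw [← sub_nonneg, hdiff]
  positivity

theorem le_div_add_div_sq (hm : 1 ≤ m) (hs : 0 ≤ s) (hsQ : s ≤ Q) (hσ : 0 ≤ σ2)
    (h : σ2 * (2 * m - 1) ≤ μ) :
    σ2 ≤ μ / (m + s) + σ2 * (Q + s ^ 2) / (m + s) ^ 2 := by
  have hms : 0 < m + s := by linarith
  have hnum : 0 ≤ (μ - σ2 * m) * m + (μ - 2 * σ2 * m) * s + σ2 * Q := by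
    nlinarith [mul_nonneg hσ (sub_nonneg.2 hsQ), mul_nonneg hσ (sub_nonneg.2 hm),
      mul_nonneg hs (sub_nonneg.2 h)]
  have hdiff : μ / (m + s) + σ2 * (Q + s ^ 2) / (m + s) ^ 2 - σ2 =
      ((μ - σ2 * m) * m + (μ - 2 * σ2 * m) * s + σ2 * Q) / (m + s) ^ 2 := by
    field_simp
    ring
  rw [← sub_nonneg, hdiff]
  positivity

end ErrorBounds

theorem error_lower_bound_general [DecidableEq ι] (μ σ2 : ℝ) (n : ι → ℕ)
    (hμ : 0 < μ) (hσ : 0 < σ2) (hn : ∀ i, 0 < n i)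
    (j : ι) (C : Finset ι) (hj : j ∉ C) :
    ((μ + σ2) / (2 * σ2) ≤ (n j : ℝ) →
      (1 / 2) * (μ / (n j : ℝ)) ≤ err μ σ2 n (insert j C) j) ∧
    ((n j : ℝ) < (μ + σ2) / (2 * σ2) →
      σ2 ≤ err μ σ2 n (insert j C) j) := by
  have hm : (1 : ℝ) ≤ n j := by exact_mod_cast hn j
  have hs : 0 ≤ ∑ i ∈ C, (n i : ℝ) := sum_nonneg fun i _ => Nat.cast_nonneg _
  have h2σ : 0 < 2 * σ2 := by positivity
  rw [err_insert_self μ σ2 n hj]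
  refine ⟨fun h => ?_, fun h => ?_⟩
  · rw [div_le_iff₀ h2σ] at h
    exact half_div_le_div_add_div_sq (by linarith) hs (sum_nonneg fun i _ => by positivity)
      hμ.le hσ.le (by linarith)
  · rw [lt_div_iff₀ h2σ] at h
    exact le_div_add_div_sq hm hs (sum_natCast_le_sum_natCast_sq n C) hσ.le (by linarith)

/-- (Lower bound on achievable error.)  Assume `μ_e ≥ σ²`.  Let `j` be a player and `C`
any (possibly empty) coalition not containing `j`.  If `n_j ≥ (μ_e + σ²)/(2σ²)` then
`err_j(C ∪ {j}) ≥ (1/2)·μ_e/n_j`; otherwise `err_j(C ∪ {j}) ≥ σ²`. -/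
theorem error_lower_bound [DecidableEq ι] (μ σ2 : ℝ) (n : ι → ℕ)
    (hμ : 0 < μ) (hσ : 0 < σ2) (hμσ : σ2 ≤ μ) (hn : ∀ i, 0 < n i)
    (j : ι) (C : Finset ι) (hj : j ∉ C) :
    ((μ + σ2) / (2 * σ2) ≤ (n j : ℝ) →
      (1 / 2) * (μ / (n j : ℝ)) ≤ err μ σ2 n (insert j C) j) ∧
    ((n j : ℝ) < (μ + σ2) / (2 * σ2) →
      σ2 ≤ err μ σ2 n (insert j C) j) :=
  error_lower_bound_general μ σ2 n hμ hσ hn j C hj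
end

section
/- Let j be a player and C a nonempty coalition of players not containing j. If the total number of samples in C satisfies T_C ≥ μ_e/(3σ²), then err_j(C ∪ {j}) ≤ 7.25·σ². -/
/-!
Write `T` for the total number of samples of the coalition. The error is `μ_e / T` plus a
variance term. The variance term is at most `2σ²`, because the partners' samples sum to at most
`T` and their squares sum to at most the square of their sum. Once `T ≥ μ_e / (3σ²)`, the first
term is at most `3σ²`. So the error is at most `5σ²`.
-/

open Finset

variable {ι : Type*}

section
variable [DecidableEq ι] (μ : ℝ) {σ2 : ℝ} (n : ι → ℕ)

theorem err_le_div_add_two_mul (hσ : 0 ≤ σ2) (C : Finset ι) (j : ι) :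
    err μ σ2 n C j ≤ μ / ∑ i ∈ C, (n i : ℝ) + 2 * σ2 := by
  set T := ∑ i ∈ C, (n i : ℝ)
  set P := ∑ i ∈ C.erase j, (n i : ℝ)
  have hsq : ∑ i ∈ C.erase j, (n i : ℝ) ^ 2 ≤ P ^ 2 :=
    sum_sq_le_sq_sum_of_nonneg fun i _ => Nat.cast_nonneg _
  have hPT : P ≤ T :=
    sum_le_sum_of_subset_of_nonneg (erase_subset j C) fun i _ _ => Nat.cast_nonneg _
  have hP : 0 ≤ P := sum_nonneg fun i _ => Nat.cast_nonneg _
  have hvar : σ2 * (∑ i ∈ C.erase j, (n i : ℝ) ^ 2 + P ^ 2) / T ^ 2 ≤ 2 * σ2 := by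
    refine div_le_of_le_mul₀ (sq_nonneg T) (by positivity) ?_
    calc σ2 * (∑ i ∈ C.erase j, (n i : ℝ) ^ 2 + P ^ 2) ≤ σ2 * (2 * P ^ 2) := by
          gcongr; linarith
      _ ≤ 2 * σ2 * T ^ 2 := by nlinarith [pow_le_pow_left₀ hP hPT 2]
  unfold err
  linarith

theorem err_le_five_mul (hσ : 0 < σ2) {D : Finset ι}
    (hT : μ / (3 * σ2) ≤ ∑ i ∈ D, (n i : ℝ)) (j : ι) :
    err μ σ2 n D j ≤ 5 * σ2 := by
  have hfirst : μ / ∑ i ∈ D, (n i : ℝ) ≤ 3 * σ2 := by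
    refine div_le_of_le_mul₀ (sum_nonneg fun i _ => Nat.cast_nonneg _) (by positivity) ?_
    linarith [(div_le_iff₀ (by positivity : (0 : ℝ) < 3 * σ2)).1 hT]
  linarith [err_le_div_add_two_mul μ n hσ.le D j]

end

theorem error_upper_bound_heavy_partners_general [DecidableEq ι] (μ σ2 : ℝ) (n : ι → ℕ)
    (hσ : 0 < σ2)
    (j : ι) (C : Finset ι)
    (hT : μ / (3 * σ2) ≤ ∑ i ∈ C, (n i : ℝ)) :
    err μ σ2 n (insert j C) j ≤ 7.25 * σ2 := by
  have hgrow : ∑ i ∈ C, (n i : ℝ) ≤ ∑ i ∈ insert j C, (n i : ℝ) :=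
    sum_le_sum_of_subset_of_nonneg (subset_insert j C) fun i _ _ => Nat.cast_nonneg _
  linarith [err_le_five_mul μ n hσ (hT.trans hgrow) j]

/-- If a player `j` federates with a nonempty coalition `C` whose total number of
samples is at least `μ_e/(3σ²)`, then `err_j(C ∪ {j}) ≤ 7.25·σ²`. -/
theorem error_upper_bound_heavy_partners [DecidableEq ι] (μ σ2 : ℝ) (n : ι → ℕ)
    (hμ : 0 < μ) (hσ : 0 < σ2) (hn : ∀ i, 0 < n i)
    (j : ι) (C : Finset ι) (hC : C.Nonempty) (hj : j ∉ C)
    (hT : μ / (3 * σ2) ≤ ∑ i ∈ C, (n i : ℝ)) :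
    err μ σ2 n (insert j C) j ≤ 7.25 * σ2 :=
  error_upper_bound_heavy_partners_general μ σ2 n hσ j C hT
end

section
/- (Welcoming lemma.) Let C be a nonempty coalition in which every member has at most μ_e/(3σ²) samples, and let k ∉ C be a player with n_k ≤ μ_e/(3σ²). Then every member j ∈ C strictly benefits from the addition of k: err_j(C ∪ {k}) < err_j(C). -/
open Finset

variable {ι : Type*}

/-!
Write `m` for the samples of `j`, `T` and `Q` for the sum and the sum of squares of the samples
of the other members of `C`, `a` for the samples of `k`, and `S = T + m`. Then
`err_j(C) - err_j(C ∪ {k}) = a σ² F / (S² (S + a)²)` with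
`F = 3B S (S + a) + (Q + T²)(2S + a) - 2S²(a + T)` and `μ_e = 3σ² B`.
When `a, m ≤ B`, lowering `B` to `a` in one copy of `B S²` and to `m` everywhere else leaves
`F ≥ 2m²S + maT + 2am² > 0`.
-/

/-- The error of a player with `m` samples whose partners have `T` samples in total, with sum of
squares `Q`. -/
noncomputable def pooledErr (μ σ2 m T Q : ℝ) : ℝ :=
  μ / (T + m) + σ2 * (Q + T ^ 2) / (T + m) ^ 2

theorem err_eq_pooledErr [DecidableEq ι] (μ σ2 : ℝ) (n : ι → ℕ) {C : Finset ι} {j : ι}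
    (hj : j ∈ C) :
    err μ σ2 n C j = pooledErr μ σ2 (n j) (∑ i ∈ C.erase j, (n i : ℝ))
      (∑ i ∈ C.erase j, (n i : ℝ) ^ 2) := by
  rw [err, pooledErr, ← sum_erase_add C _ hj, add_comm (∑ i ∈ C.erase j, (n i : ℝ) ^ 2)]

theorem err_insert_eq_pooledErr [DecidableEq ι] (μ σ2 : ℝ) (n : ι → ℕ) {C : Finset ι} {j k : ι}
    (hj : j ∈ C) (hk : k ∉ C) :
    err μ σ2 n (insert k C) j = pooledErr μ σ2 (n j) (∑ i ∈ C.erase j, (n i : ℝ) + n k)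
      (∑ i ∈ C.erase j, (n i : ℝ) ^ 2 + (n k : ℝ) ^ 2) := by
  have hkj : k ∉ C.erase j := fun h => hk (mem_of_mem_erase h)
  have hjk : k ≠ j := by rintro rfl; exact hk hj
  rw [err_eq_pooledErr μ σ2 n (mem_insert_of_mem hj), erase_insert_of_ne hjk,
    sum_insert hkj, sum_insert hkj, add_comm (n k : ℝ), add_comm ((n k : ℝ) ^ 2)]

theorem gain_numerator_pos {B a m T Q : ℝ} (ha : 0 < a) (haB : a ≤ B) (hm : 0 < m) (hmB : m ≤ B)
    (hT : 0 ≤ T) (hQ : 0 ≤ Q) :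
    0 < 3 * B * (T + m) * (T + m + a) + (Q + T ^ 2) * (2 * (T + m) + a)
      - 2 * (T + m) ^ 2 * (a + T) := by
  have hS : 0 < T + m := by linarith
  have hrest : 0 < 2 * m ^ 2 * (T + m) + m * a * T + 2 * a * m ^ 2 := by positivity
  have h₁ : 0 ≤ (B - a) * (T + m) ^ 2 := by have := sub_nonneg.2 haB; positivity
  have h₂ : 0 ≤ (B - m) * (T + m) * (2 * (T + m) + 3 * a) := by
    have := sub_nonneg.2 hmB; positivity
  have h₃ : 0 ≤ Q * (2 * (T + m) + a) := by positivity
  linear_combination hrest + h₁ + h₂ + h₃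

theorem pooledErr_add_lt {μ σ2 a m T Q : ℝ} (hσ : 0 < σ2) (ha : 0 < a) (hm : 0 < m)
    (hT : 0 ≤ T) (hQ : 0 ≤ Q) (haB : a ≤ μ / (3 * σ2)) (hmB : m ≤ μ / (3 * σ2)) :
    pooledErr μ σ2 m (T + a) (Q + a ^ 2) < pooledErr μ σ2 m T Q := by
  set B := μ / (3 * σ2) with hB
  have hμ : μ = 3 * σ2 * B := by rw [hB]; field_simp
  have hS : 0 < T + m := by linarith
  have hgain : pooledErr μ σ2 m T Q - pooledErr μ σ2 m (T + a) (Q + a ^ 2) =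
      a * σ2 * (3 * B * (T + m) * (T + m + a) + (Q + T ^ 2) * (2 * (T + m) + a)
        - 2 * (T + m) ^ 2 * (a + T)) / ((T + m) ^ 2 * (T + m + a) ^ 2) := by
    rw [pooledErr, pooledErr, hμ]
    field_simp
    ring
  have := gain_numerator_pos ha haB hm hmB hT hQ
  rw [← sub_pos, hgain]
  positivity

theorem welcoming_lemma_general [DecidableEq ι] (μ σ2 : ℝ) (n : ι → ℕ)
    (hσ : 0 < σ2) (hn : ∀ i, 0 < n i)
    (C : Finset ι) (hCsmall : ∀ i ∈ C, (n i : ℝ) ≤ μ / (3 * σ2))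
    (k : ι) (hk : k ∉ C) (hksmall : (n k : ℝ) ≤ μ / (3 * σ2)) :
    ∀ j ∈ C, err μ σ2 n (insert k C) j < err μ σ2 n C j := by
  intro j hj
  rw [err_insert_eq_pooledErr μ σ2 n hj hk, err_eq_pooledErr μ σ2 n hj]
  exact pooledErr_add_lt hσ (by exact_mod_cast hn k) (by exact_mod_cast hn j)
    (sum_nonneg fun _ _ => by positivity) (sum_nonneg fun _ _ => by positivity)
    hksmall (hCsmall j hj)

/-- (Welcoming lemma.)  Let `C` be a nonempty coalition in which every member has at
most `μ_e/(3σ²)` samples, and let `k ∉ C` with `n_k ≤ μ_e/(3σ²)`.  Then every member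
`j ∈ C` strictly benefits from the addition of `k`. -/
theorem welcoming_lemma [DecidableEq ι] (μ σ2 : ℝ) (n : ι → ℕ)
    (hμ : 0 < μ) (hσ : 0 < σ2) (hn : ∀ i, 0 < n i)
    (C : Finset ι) (hC : C.Nonempty) (hCsmall : ∀ i ∈ C, (n i : ℝ) ≤ μ / (3 * σ2))
    (k : ι) (hk : k ∉ C) (hksmall : (n k : ℝ) ≤ μ / (3 * σ2)) :
    ∀ j ∈ C, err μ σ2 n (insert k C) j < err μ σ2 n C j :=
  welcoming_lemma_general μ σ2 n hσ hn C hCsmall k hk hksmall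
end

section
/- Let A and B be disjoint nonempty coalitions in which every player has at most μ_e/(3σ²) samples, let a be a player of maximal size in A and b a player of maximal size in B. If n_a > n_b, T_A − n_a < T_B − n_b, and T_A − n_a ≤ μ_e/(3σ²), then player a strictly prefers to join B: err_a(B ∪ {a}) < err_a(A). -/
open Finset

variable {ι : Type*}

/-!
Player `a`'s error in a coalition depends only on the total `y` and the sum of squares `q` of the
other members' samples, and it is increasing in `q`. Bounding `∑_B n_i² ≤ n_b T_B` and
`∑_{A∖a} n_i² ≥ 0` reduces the claim to a rational inequality in `x = T_A − n_a`, `T_B`, `n_a`,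
`n_b`; after clearing denominators it is a sum of three nonnegative terms, one of them positive.
The first term is `(μ − σ²(2 n_a + x))` times a positive factor, nonnegative because
`n_a, x ≤ μ/(3σ²)`.
-/

/-- The error `err_j(C)` of a player with `N` samples, written in terms of the total `y` and the
sum of squares `q` of the samples of the other members of `C`. -/
noncomputable def joinErr (μ σ2 N y q : ℝ) : ℝ :=
  μ / (y + N) + σ2 * (q + y ^ 2) / (y + N) ^ 2

lemma err_eq_joinErr [DecidableEq ι] (μ σ2 : ℝ) (n : ι → ℕ) {C : Finset ι} {j : ι}
    (hj : j ∈ C) :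
    err μ σ2 n C j =
      joinErr μ σ2 (n j) (∑ i ∈ C.erase j, (n i : ℝ)) (∑ i ∈ C.erase j, (n i : ℝ) ^ 2) := by
  rw [err, joinErr, ← sum_erase_add C _ hj]

lemma joinErr_eq_div (μ σ2 N q : ℝ) {y : ℝ} (hy : y + N ≠ 0) :
    joinErr μ σ2 N y q = (μ * (y + N) + σ2 * (q + y ^ 2)) / (y + N) ^ 2 := by
  rw [joinErr]
  field_simp

lemma joinErr_mono_right {μ σ2 N y q q' : ℝ} (hσ : 0 ≤ σ2) (hq : q ≤ q') :
    joinErr μ σ2 N y q ≤ joinErr μ σ2 N y q' := by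
  unfold joinErr
  gcongr

lemma sum_sq_le_mul_sum {R : Type*} [CommSemiring R] [PartialOrder R] [IsOrderedRing R]
    {s : Finset ι} {f : ι → R} {M : R} (hf : ∀ i ∈ s, 0 ≤ f i)
    (hM : ∀ i ∈ s, f i ≤ M) : ∑ i ∈ s, f i ^ 2 ≤ M * ∑ i ∈ s, f i := by
  rw [mul_sum]
  refine sum_le_sum fun i hi => ?_
  rw [sq]
  exact mul_le_mul_of_nonneg_right (hM i hi) (hf i hi)

lemma joinErr_lt_joinErr {μ σ2 N x m T : ℝ} (hσ : 0 < σ2) (hx : 0 ≤ x) (hm : 0 ≤ m)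
    (hmN : m < N) (hxT : x + m < T) (hNμ : N ≤ μ / (3 * σ2)) (hxμ : x ≤ μ / (3 * σ2)) :
    joinErr μ σ2 N T (m * T) < joinErr μ σ2 N x 0 := by
  rw [le_div_iff₀ (by positivity)] at hNμ hxμ
  have hP : 0 < x + N := by linarith
  have hR : 0 < T + N := by linarith
  have t₁ : 0 ≤ (μ - σ2 * (2 * N + x)) * (x + N) * (T + N) * (T - x) := by
    have : 0 ≤ μ - σ2 * (2 * N + x) := by linarith
    have : 0 ≤ T - x := by linarith
    positivity
  have t₂ : 0 ≤ σ2 * x * (x + N) * (T + N) * (T - x - m) := by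
    have : 0 ≤ T - x - m := by linarith
    positivity
  have t₃ : 0 < σ2 * N * (T - x) * (N * (T + N) + (x + N) * (N - m)) := by
    have : 0 < T - x := by linarith
    have : 0 < N - m := by linarith
    have : 0 < N := by linarith
    positivity
  -- the difference of the cross-multiplied sides is exactly `t₁ + t₂ + t₃`
  rw [joinErr_eq_div _ _ _ _ hR.ne', joinErr_eq_div _ _ _ _ hP.ne',
    div_lt_div_iff₀ (by positivity) (by positivity)]
  linear_combination t₁ + t₂ + t₃

theorem largest_player_prefers_other_group_general [DecidableEq ι]
    (μ σ2 : ℝ) (n : ι → ℕ) (hσ : 0 < σ2)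
    (A B : Finset ι) (hdisj : Disjoint A B)
    (hsmall : ∀ i ∈ A ∪ B, (n i : ℝ) ≤ μ / (3 * σ2))
    (a : ι) (ha : a ∈ A)
    (b : ι) (hbmax : ∀ i ∈ B, n i ≤ n b)
    (hab : n b < n a)
    (hT : (∑ i ∈ A, (n i : ℝ)) - (n a : ℝ) < (∑ i ∈ B, (n i : ℝ)) - (n b : ℝ))
    (hTA : (∑ i ∈ A, (n i : ℝ)) - (n a : ℝ) ≤ μ / (3 * σ2)) :
    err μ σ2 n (insert a B) a < err μ σ2 n A a := by
  have haB : a ∉ B := disjoint_left.mp hdisj ha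
  rw [err_eq_joinErr μ σ2 n (mem_insert_self a B), erase_insert haB, err_eq_joinErr μ σ2 n ha]
  rw [← sum_erase_eq_sub ha] at hT hTA
  calc _ ≤ joinErr μ σ2 (n a) (∑ i ∈ B, (n i : ℝ)) (n b * ∑ i ∈ B, (n i : ℝ)) :=
        joinErr_mono_right hσ.le <| sum_sq_le_mul_sum (fun _ _ => by positivity)
          fun i hi => by exact_mod_cast hbmax i hi
    _ < joinErr μ σ2 (n a) (∑ i ∈ A.erase a, (n i : ℝ)) 0 :=
        joinErr_lt_joinErr hσ (sum_nonneg fun _ _ => by positivity) (by positivity)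
          (by exact_mod_cast hab) (by linarith) (hsmall a (mem_union_left B ha)) hTA
    _ ≤ _ := joinErr_mono_right hσ.le (sum_nonneg fun _ _ => by positivity)

/-- Let `A` and `B` be disjoint nonempty coalitions in which every player has at most
`μ_e/(3σ²)` samples, let `a` be a player of maximal size in `A` and `b` a player of
maximal size in `B`.  If `n_a > n_b`, `T_A − n_a < T_B − n_b`, and
`T_A − n_a ≤ μ_e/(3σ²)`, then player `a` strictly prefers to join `B`. -/
theorem largest_player_prefers_other_group [DecidableEq ι]
    (μ σ2 : ℝ) (n : ι → ℕ) (hμ : 0 < μ) (hσ : 0 < σ2) (hn : ∀ i, 0 < n i)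
    (A B : Finset ι) (hA : A.Nonempty) (hB : B.Nonempty) (hdisj : Disjoint A B)
    (hsmall : ∀ i ∈ A ∪ B, (n i : ℝ) ≤ μ / (3 * σ2))
    (a : ι) (ha : a ∈ A) (hamax : ∀ i ∈ A, n i ≤ n a)
    (b : ι) (hb : b ∈ B) (hbmax : ∀ i ∈ B, n i ≤ n b)
    (hab : n b < n a)
    (hT : (∑ i ∈ A, (n i : ℝ)) - (n a : ℝ) < (∑ i ∈ B, (n i : ℝ)) - (n b : ℝ))
    (hTA : (∑ i ∈ A, (n i : ℝ)) - (n a : ℝ) ≤ μ / (3 * σ2)) :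
    err μ σ2 n (insert a B) a < err μ σ2 n A a :=
  largest_player_prefers_other_group_general μ σ2 n hσ A B hdisj hsmall a ha b hbmax hab hT hTA
end
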